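/- arXiv:2508.03930 — 2 statements merged into one kernel-verified Lean document; each statement's English description precedes it below -/
import Mathlib

section
/- A sequence a_1, ..., a_n over an ordered alphabet contains a repeating element if and only if the string a_1^2 b_1 a_2^2 b_2 ⋯ a_n^2 b_n, where b_1 b_2 ⋯ b_n is a square-free string over a disjoint alphabet, contains fewer than n distinct square substrings. -/
open List

variable {α : Type*}

/-- `frag T a b` is the fragment `T[a..b]` (inclusive, 0-based). -/
def frag (T : List α) (a b : ℕ) : List α := (T.drop a).take (b + 1 - a)

/-- `p` is a period of `S`: `0 < p ≤ |S|` and `S[i] = S[i+p]` for all valid `i`. -/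
def IsPeriodOf (p : ℕ) (S : List α) : Prop :=
  0 < p ∧ p ≤ S.length ∧ ∀ i : ℕ, i + p < S.length → S[i]? = S[i + p]?

/-- The smallest period of `S`. -/
noncomputable def minPeriod (S : List α) : ℕ := sInf {p | IsPeriodOf p S}

/-- `T[a..b]` is a run: periodic (its smallest period occurs at least twice)
and maximal on both sides. -/
def IsRun (T : List α) (a b : ℕ) : Prop :=
  a ≤ b ∧ b < T.length ∧
  2 * minPeriod (frag T a b) ≤ b + 1 - a ∧
  (a = 0 ∨ T[a - 1]? ≠ T[a - 1 + minPeriod (frag T a b)]?) ∧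
  (b = T.length - 1 ∨ T[b + 1]? ≠ T[b + 1 - minPeriod (frag T a b)]?)

/-- `W` occurs in `T` at position `s`. -/
def OccursAt (T : List α) (s : ℕ) (W : List α) : Prop :=
  s + W.length ≤ T.length ∧ (T.drop s).take W.length = W

/-- The set of distinct square substrings of `T`. -/
def Squares (T : List α) : Set (List α) :=
  {W | ∃ X : List α, X ≠ [] ∧ W = X ++ X ∧ W <:+: T}

/-- A non-empty string is primitive if it is not a proper power. -/
def Primitive (U : List α) : Prop :=
  U ≠ [] ∧ ∀ (V : List α) (k : ℕ), U = (List.replicate k V).flatten → k = 1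

/-- Cyclic rotation moving the first `c` characters to the end. -/
def rot (c : ℕ) (L : List α) : List α := L.drop c ++ L.take c

/-- `lam` is the Lyndon root of a periodic string `S`: the lexicographically
smallest rotation of `S[0..per(S))`. -/
def LyndonRootOf [LinearOrder α] (S lam : List α) : Prop :=
  (∃ c < minPeriod S, lam = rot c (S.take (minPeriod S))) ∧
  ∀ c < minPeriod S, lam ≤ rot c (S.take (minPeriod S))

/-- Squares generated by a periodic string `U`: squares contained in `U`
whose smallest period equals that of `U`. -/
def FragSquares (U : List α) : Set (List α) :=
  {W | ∃ X : List α, X ≠ [] ∧ W = X ++ X ∧ W <:+: U ∧ minPeriod W = minPeriod U}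

/-- `subper U`: the minimum of `per(X)` over squares `X²` generated by `U`. -/
noncomputable def subper (U : List α) : ℕ :=
  sInf {q | ∃ X : List α, X ≠ [] ∧ (X ++ X) <:+: U ∧
    minPeriod (X ++ X) = minPeriod U ∧ minPeriod X = q}

/-- Fragments `[a..b]` and `[a'..b']` are neighboring:
`[a-1..b+1] ∩ [a'..b'] ≠ ∅`. -/
def Neighboring (a b a' b' : ℕ) : Prop := a ≤ b' + 1 ∧ a' ≤ b + 1

/-- `T[x..y]` is a layer of the pyramid of the neighboring runs
`F = T[a..b]` and `F' = T[a'..b']` (with `a < a'`): a subperiodic run `R`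
with `subper(R) = per(F)` such that `R ∩ (F ∪ F')` is periodic with
period `per(R)`. -/
def IsLayer (T : List α) (a b a' b' x y : ℕ) : Prop :=
  IsRun T x y ∧
  4 * subper (frag T x y) ≤ minPeriod (frag T x y) ∧
  subper (frag T x y) = minPeriod (frag T a b) ∧
  2 * minPeriod (frag T x y) ≤ min y b' + 1 - max x a ∧
  IsPeriodOf (minPeriod (frag T x y)) (frag T (max x a) (min y b'))

/-- A `τ`-synchronizing set of `T` (Kempa–Kociumaka): consistency and density. -/
def SyncSet (T : List α) (τ : ℕ) (S : Set ℕ) : Prop :=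
  (∀ i ∈ S, i + 2 * τ ≤ T.length) ∧
  (∀ i j : ℕ, i + 2 * τ ≤ T.length → j + 2 * τ ≤ T.length →
    (T.drop i).take (2 * τ) = (T.drop j).take (2 * τ) → (i ∈ S ↔ j ∈ S)) ∧
  (∀ i : ℕ, i + 3 * τ - 1 ≤ T.length →
    ((∀ k ∈ S, k < i ∨ i + τ ≤ k) ↔
      3 * minPeriod ((T.drop i).take (3 * τ - 1)) ≤ τ))

/-! Projecting onto the `β`-letters sends a square of `a₁²b₁⋯aₙ²bₙ` to a square of `b₁⋯bₙ`,
so by square-freeness no square contains a letter `bᵢ`. The letters `bᵢ` cut the word into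
the blocks `aᵢaᵢ`, so the squares are exactly the words `aᵢaᵢ`, one for each distinct value
of `a`. -/

namespace List

variable {γ : Type*}

theorem infix_or_infix_of_infix_append_cons {w u v : List γ} {s : γ} (hs : s ∉ w)
    (h : w <:+: u ++ s :: v) : w <:+: u ∨ w <:+: v := by
  rcases infix_append_iff_ne_nil.mp h with hu | hv | ⟨_, l₂, _, hl₂, rfl, _, hpre⟩
  · exact Or.inl hu
  · rcases infix_cons_iff.mp hv with hpre | hv
    · rcases prefix_cons_iff.mp hpre with rfl | ⟨t, rfl, _⟩
      · exact Or.inl nil_infix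
      · exact absurd mem_cons_self hs
    · exact Or.inr hv
  · obtain ⟨t, rfl, _⟩ := (prefix_cons_iff.mp hpre).resolve_left hl₂
    exact absurd (mem_append_right _ mem_cons_self) hs

theorem exists_infix_of_infix_flatten_append_singleton {w : List γ} :
    ∀ {L : List (List γ × γ)}, (∀ p ∈ L, p.2 ∉ w) →
      w <:+: (L.map fun p => p.1 ++ [p.2]).flatten → w = [] ∨ ∃ p ∈ L, w <:+: p.1
  | [], _, h => Or.inl (eq_nil_of_infix_nil h)
  | p :: L, hsep, h => by
    rw [map_cons, flatten_cons, append_assoc, singleton_append] at h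
    rcases infix_or_infix_of_infix_append_cons (hsep p mem_cons_self) h with hp | hL
    · exact Or.inr ⟨p, mem_cons_self, hp⟩
    · rcases exists_infix_of_infix_flatten_append_singleton
        (fun q hq => hsep q (mem_cons_of_mem p hq)) hL with hw | ⟨q, hq, hwq⟩
      · exact Or.inl hw
      · exact Or.inr ⟨q, mem_cons_of_mem p hq, hwq⟩

end List

theorem Set.ncard_range_lt_iff_exists_ne {n : ℕ} (a : Fin n → α) :
    (Set.range a).ncard < n ↔ ∃ i j, i ≠ j ∧ a i = a j := by
  classical
  have hle : (Finset.univ.image a).card ≤ n := by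
    simpa using Finset.card_image_le (s := .univ) (f := a)
  have heq : (Finset.univ.image a).card = n ↔ Function.Injective a := by
    simpa [Set.injOn_univ] using Finset.card_image_iff (s := .univ) (f := a)
  rw [← Set.image_univ, ← Finset.coe_univ, ← Finset.coe_image, Set.ncard_coe_finset,
    hle.lt_iff_ne, ne_eq, heq, Function.not_injective_iff]
  exact exists₂_congr fun _ _ => and_comm

section DoubledWord

variable {β : Type*} {n : ℕ} (a : Fin n → α) (b : Fin n → β)

def doubledWord : List (α ⊕ β) :=
  (List.ofFn fun i => [Sum.inl (a i), Sum.inl (a i), Sum.inr (b i)]).flatten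

theorem filterMap_getRight_doubledWord :
    (doubledWord a b).filterMap Sum.getRight? = List.ofFn b := by
  rw [doubledWord, List.filterMap_flatten, List.map_ofFn, List.ofFn_eq_map, List.ofFn_eq_map,
    List.map_eq_flatMap (f := b)]
  rfl

theorem exists_infix_pair_of_infix_doubledWord {w : List (α ⊕ β)}
    (hw : ∀ i, Sum.inr (b i) ∉ w) (h : w <:+: doubledWord a b) :
    w = [] ∨ ∃ i, w <:+: [Sum.inl (a i), Sum.inl (a i)] := by
  have hsplit : doubledWord a b = ((List.ofFn fun i =>
      (([Sum.inl (a i), Sum.inl (a i)] : List (α ⊕ β)), Sum.inr (b i))).map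
        fun p => p.1 ++ [p.2]).flatten := by
    rw [List.map_ofFn]; rfl
  rw [hsplit] at h
  rcases List.exists_infix_of_infix_flatten_append_singleton (by simpa using hw) h with
    hnil | ⟨_, hp, hwp⟩
  · exact Or.inl hnil
  · obtain ⟨i, rfl⟩ := List.mem_ofFn.mp hp
    exact Or.inr ⟨i, hwp⟩

theorem pair_infix_doubledWord (i : Fin n) :
    [Sum.inl (a i), Sum.inl (a i)] <:+: doubledWord a b :=
  (List.prefix_append _ [Sum.inr (b i)]).isInfix.trans
    (List.infix_of_mem_flatten (List.mem_ofFn.mpr ⟨i, rfl⟩))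

theorem squares_doubledWord (hb : ∀ X : List β, X ≠ [] → ¬ (X ++ X) <:+: List.ofFn b) :
    Squares (doubledWord a b) = (fun x => [Sum.inl x, Sum.inl x]) '' Set.range a := by
  ext W
  constructor
  · rintro ⟨X, hX, rfl, hXX⟩
    have hright : X.filterMap Sum.getRight? = [] := by
      by_contra hne
      apply hb _ hne
      simpa [List.filterMap_append, filterMap_getRight_doubledWord] using
        hXX.filterMap Sum.getRight?
    have hw : ∀ i, Sum.inr (b i) ∉ X ++ X := by
      intro i hi
      exact Option.some_ne_none (b i)
        (List.filterMap_eq_nil_iff.mp hright (Sum.inr (b i)) (by simpa using hi))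
    rcases exists_infix_pair_of_infix_doubledWord a b hw hXX with hnil | ⟨i, hi⟩
    · exact absurd (List.append_eq_nil_iff.mp hnil).1 hX
    · have hlen := hi.length_le
      have hX1 : X.length = 1 := by
        have := List.length_pos_iff.mpr hX
        simp only [List.length_append, List.length_cons, List.length_nil] at hlen
        omega
      exact ⟨a i, ⟨i, rfl⟩, (hi.eq_of_length (by simp [hX1])).symm⟩
  · rintro ⟨_, ⟨i, rfl⟩, rfl⟩
    exact ⟨[Sum.inl (a i)], List.cons_ne_nil _ _, rfl, pair_infix_doubledWord a b i⟩

end DoubledWord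

/-- A sequence `a` has a repeated element iff the string
`a₁²b₁a₂²b₂⋯aₙ²bₙ`, for a square-free `b₁⋯bₙ` over a disjoint alphabet,
has fewer than `n` distinct square substrings. -/
theorem repeat_iff_few_squares {α β : Type*} (n : ℕ) (a : Fin n → α) (b : Fin n → β)
    (hb : ∀ X : List β, X ≠ [] → ¬ (X ++ X) <:+: List.ofFn b) :
    (∃ i j : Fin n, i ≠ j ∧ a i = a j) ↔
      (Squares ((List.ofFn fun i =>
        ([Sum.inl (a i), Sum.inl (a i), Sum.inr (b i)] : List (α ⊕ β))).flatten)).ncard < n := by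
  have hinj : Function.Injective fun x : α => ([Sum.inl x, Sum.inl x] : List (α ⊕ β)) :=
    fun x y h => by simpa using h
  rw [← doubledWord, squares_doubledWord a b hb, Set.ncard_image_of_injective _ hinj,
    Set.ncard_range_lt_iff_exists_ne]
end

section
/- Every square substring X^2 of a string T is generated by some run of T; that is, there exists a run R of T containing an occurrence of X^2 such that per(X^2) = per(R). -/
open List

variable {α : Type*}

/-! Extend an occurrence of `X²` to the left and to the right for as long as `p = per(X²)` stays
a period. The maximal fragment `R` obtained has period `p`, and no smaller one, since any period
of `R` that is at most `|X²|` is inherited by `X²`; as `|R| ≥ |X²| ≥ 2p`, `R` is a run. -/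

section Periods

variable {S W : List α} {p : ℕ}

lemma IsPeriodOf.minPeriod_le (h : IsPeriodOf p S) : minPeriod S ≤ p := Nat.sInf_le h

lemma IsPeriodOf.isPeriodOf_minPeriod (h : IsPeriodOf p S) : IsPeriodOf (minPeriod S) S :=
  Nat.sInf_mem (s := {q | IsPeriodOf q S}) ⟨p, h⟩

lemma IsPeriodOf.of_isInfix (h : IsPeriodOf p S) (hW : W <:+: S) (hp : p ≤ W.length) :
    IsPeriodOf p W := by
  obtain ⟨u, v, rfl⟩ := hW
  refine ⟨h.1, hp, fun i hi => ?_⟩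
  have hget : ∀ j < W.length, W[j]? = (u ++ W ++ v)[u.length + j]? := fun j hj => by
    rw [List.append_assoc, List.getElem?_append_right (by omega), Nat.add_sub_cancel_left,
      List.getElem?_append_left hj]
  rw [hget i (by omega), hget (i + p) hi, ← Nat.add_assoc]
  exact h.2.2 _ (by simp only [List.length_append]; omega)

lemma isPeriodOf_length_append_self {X : List α} (hX : X ≠ []) :
    IsPeriodOf X.length (X ++ X) := by
  refine ⟨List.length_pos_iff.mpr hX, by simp, fun i hi => ?_⟩
  simp only [List.length_append] at hi
  rw [List.getElem?_append_left (by omega), List.getElem?_append_right (by omega),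
    Nat.add_sub_cancel]

end Periods

/-- `p` is a period of `T[a..b]`, stated on the positions of `T` and without the requirement
`0 < p ≤ b + 1 - a`. -/
def PeriodicOn (T : List α) (p a b : ℕ) : Prop :=
  ∀ i, a ≤ i → i + p ≤ b → T[i]? = T[i + p]?

namespace PeriodicOn

variable {T : List α} {p a b : ℕ}

lemma mono {a' b' : ℕ} (h : PeriodicOn T p a b) (ha : a ≤ a') (hb : b' ≤ b) :
    PeriodicOn T p a' b' :=
  fun i hi hip => h i (ha.trans hi) (hip.trans hb)

lemma exists_left_maximal (h : PeriodicOn T p a b) :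
    ∃ a' ≤ a, PeriodicOn T p a' b ∧ (a' = 0 ∨ T[a' - 1]? ≠ T[a' - 1 + p]?) := by
  classical
  have hex : ∃ c, PeriodicOn T p c b := ⟨a, h⟩
  obtain ⟨c, hc, hcmin⟩ : ∃ c, PeriodicOn T p c b ∧ ∀ c' < c, ¬PeriodicOn T p c' b :=
    ⟨Nat.find hex, Nat.find_spec hex, fun _ => Nat.find_min hex⟩
  refine ⟨c, not_lt.mp fun hac => hcmin a hac h, hc, ?_⟩
  rcases Nat.eq_zero_or_pos c with h0 | hpos
  · exact Or.inl h0
  obtain ⟨i, hi, hip, hne⟩ : ∃ i, c - 1 ≤ i ∧ i + p ≤ b ∧ T[i]? ≠ T[i + p]? := by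
    simpa [PeriodicOn] using hcmin (c - 1) (by omega)
  obtain rfl : i = c - 1 := by
    by_contra hne'
    exact hne (hc i (by omega) hip)
  exact Or.inr hne

lemma exists_right_maximal (h : PeriodicOn T p a b) (hb : b < T.length) :
    ∃ b', b ≤ b' ∧ b' < T.length ∧ PeriodicOn T p a b' ∧
      (b' = T.length - 1 ∨ T[b' + 1]? ≠ T[b' + 1 - p]?) := by
  classical
  obtain ⟨b', hb', hbb', hb'T, hmax⟩ : ∃ b', PeriodicOn T p a b' ∧ b ≤ b' ∧
      b' ≤ T.length - 1 ∧ ∀ k, b' < k → k ≤ T.length - 1 → ¬PeriodicOn T p a k :=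
    ⟨_, Nat.findGreatest_spec (by omega) h, Nat.le_findGreatest (by omega) h,
      Nat.findGreatest_le _, fun _ => Nat.findGreatest_is_greatest⟩
  refine ⟨b', hbb', by omega, hb', ?_⟩
  rcases eq_or_ne b' (T.length - 1) with hlast | hlast
  · exact Or.inl hlast
  obtain ⟨i, hi, hip, hne⟩ : ∃ i, a ≤ i ∧ i + p ≤ b' + 1 ∧ T[i]? ≠ T[i + p]? := by
    simpa [PeriodicOn] using hmax (b' + 1) (by omega) (by omega)
  have hlast : i + p = b' + 1 := by
    by_contra hne'
    exact hne (hb' i hi (by omega))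
  right
  rw [← hlast, Nat.add_sub_cancel]
  exact hne.symm

end PeriodicOn

section Fragments

variable {T : List α} {a b : ℕ}

lemma length_frag (hb : b < T.length) : (frag T a b).length = b + 1 - a := by
  simp only [frag, List.length_take, List.length_drop]
  omega

lemma getElem?_frag {i : ℕ} (hi : i < b + 1 - a) : (frag T a b)[i]? = T[a + i]? := by
  rw [frag, List.getElem?_take_of_lt hi, List.getElem?_drop]

lemma isPeriodOf_frag_iff {p : ℕ} (hb : b < T.length) (hp : 0 < p) (hpl : p ≤ b + 1 - a) :
    IsPeriodOf p (frag T a b) ↔ PeriodicOn T p a b := by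
  simp only [IsPeriodOf, length_frag hb, hp, hpl, true_and]
  constructor
  · intro h i hi hip
    have := h (i - a) (by omega)
    rwa [getElem?_frag (by omega), getElem?_frag (by omega), Nat.add_sub_cancel' hi,
      ← Nat.add_assoc, Nat.add_sub_cancel' hi] at this
  · intro h i hip
    rw [getElem?_frag (by omega), getElem?_frag (by omega), ← Nat.add_assoc]
    exact h _ (by omega) (by omega)

lemma frag_isInfix_frag {a' b' : ℕ} (ha : a ≤ a') (hb : b' ≤ b) :
    frag T a' b' <:+: frag T a b := by
  have : frag T a' b' = ((frag T a b).drop (a' - a)).take (b' + 1 - a') := by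
    rw [frag, frag, List.drop_take, List.drop_drop, Nat.add_sub_cancel' ha, List.take_take,
      min_eq_left (by omega)]
  rw [this]
  exact (List.take_prefix _ _).isInfix.trans (List.drop_suffix _ _).isInfix

lemma frag_of_append_eq {pre W post : List α} (hW : W ≠ []) (hT : pre ++ W ++ post = T) :
    frag T pre.length (pre.length + W.length - 1) = W := by
  have := List.length_pos_iff.mpr hW
  rw [frag, ← hT, List.append_assoc, List.drop_left, (by omega : pre.length + W.length - 1 + 1 -
    pre.length = W.length), List.take_left']
  rfl

end Fragments

/-- Every square substring of `T` is generated by some run of `T`. -/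
theorem square_generated_by_run (T X : List α) (hX : X ≠ [])
    (hocc : (X ++ X) <:+: T) :
    ∃ a b : ℕ, IsRun T a b ∧ (X ++ X) <:+: frag T a b ∧
      minPeriod (X ++ X) = minPeriod (frag T a b) := by
  obtain ⟨pre, post, hT⟩ := hocc
  have hXX : 2 * X.length = (X ++ X).length := by simp [two_mul]
  have hlen : pre.length + (X ++ X).length ≤ T.length := by simp [← hT]
  have hX0 : 0 < X.length := List.length_pos_iff.mpr hX
  have hsq := frag_of_append_eq (by simpa using hX) hT
  have hpX := isPeriodOf_length_append_self hX
  set p := minPeriod (X ++ X)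
  have hp : IsPeriodOf p (X ++ X) := hpX.isPeriodOf_minPeriod
  have hpn : p ≤ X.length := hpX.minPeriod_le
  have hper : PeriodicOn T p pre.length (pre.length + (X ++ X).length - 1) := by
    rw [← isPeriodOf_frag_iff (by omega) hp.1 (by omega), hsq]
    exact hp
  obtain ⟨a, ha, hperL, hleft⟩ := hper.exists_left_maximal
  obtain ⟨b, hb, hbT, hperR, hright⟩ := hperL.exists_right_maximal (by omega)
  have hinf : X ++ X <:+: frag T a b := hsq ▸ frag_isInfix_frag ha hb
  have hpR : IsPeriodOf p (frag T a b) := (isPeriodOf_frag_iff hbT hp.1 (by omega)).2 hperR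
  have hmin : minPeriod (frag T a b) = p := by
    have hle := hpR.minPeriod_le
    exact le_antisymm hle (hpR.isPeriodOf_minPeriod.of_isInfix hinf (by omega)).minPeriod_le
  refine ⟨a, b, ⟨by omega, hbT, by omega, hmin ▸ hleft, hmin ▸ hright⟩, hinf, hmin.symm⟩
end
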